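/- arXiv:2308.15198 — 4 statements merged into one kernel-verified Lean document; each statement's English description precedes it below -/
import Mathlib

section
/- For every nonnegative integer r and every real x < 0, the r-th derivative of (1/2)·sech at x equals ∑_{k=0}^∞ (-1)^k (2k+1)^r e^{(2k+1)x}. -/
noncomputable def sech (x : ℝ) : ℝ := 2 / (Real.exp x + Real.exp (-x))

/-!
For `x < 0`, `sech x / 2 = eˣ / (1 + e²ˣ)` expands as the geometric series `∑ (-1)ᵏ e^((2k+1)x)`.
On a half-line `(-∞, c)` with `c < 0` the `r`-times differentiated series is dominated by the
convergent series `∑ (2k+1)ʳ e^((2k+1)c)`, so it may be differentiated termwise any number of times.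
-/

open Real Set Filter

lemma hasDerivAt_mul_pow_mul_exp_mul (a c : ℝ) (r : ℕ) (y : ℝ) :
    HasDerivAt (fun z => a * c ^ r * exp (c * z)) (a * c ^ (r + 1) * exp (c * y)) y := by
  refine ((((hasDerivAt_id y).const_mul c).exp).const_mul (a * c ^ r)).congr_deriv ?_
  rw [id, pow_succ]
  ring

section ExpSeries

variable {a ℓ : ℕ → ℝ} {b : ℝ}

lemma hasDerivAt_tsum_exp_series (hℓ : ∀ k, 0 ≤ ℓ k)
    (hsum : ∀ r y, y < b → Summable fun k => a k * ℓ k ^ r * exp (ℓ k * y))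
    (r : ℕ) {y : ℝ} (hy : y < b) :
    HasDerivAt (fun z => ∑' k, a k * ℓ k ^ r * exp (ℓ k * z))
      (∑' k, a k * ℓ k ^ (r + 1) * exp (ℓ k * y)) y := by
  obtain ⟨c, hyc, hcb⟩ := exists_between hy
  have hbound : ∀ k, ∀ z ∈ Iio c,
      ‖a k * ℓ k ^ (r + 1) * exp (ℓ k * z)‖ ≤ |a k * ℓ k ^ (r + 1) * exp (ℓ k * c)| := by
    intro k z hz
    simp only [Real.norm_eq_abs, abs_mul, abs_of_pos (exp_pos _)]
    gcongr
    exacts [hℓ k, hz.le]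
  exact hasDerivAt_tsum_of_isPreconnected (hsum (r + 1) c hcb).abs isOpen_Iio isPreconnected_Iio
    (fun k z _ => hasDerivAt_mul_pow_mul_exp_mul (a k) (ℓ k) r z) hbound hyc
    (hsum r y hy) hyc

theorem hasSum_iteratedDeriv_of_hasSum_exp_series (hℓ : ∀ k, 0 ≤ ℓ k)
    (hsum : ∀ r y, y < b → Summable fun k => a k * ℓ k ^ r * exp (ℓ k * y))
    {F : ℝ → ℝ} (hF : ∀ y, y < b → HasSum (fun k => a k * exp (ℓ k * y)) (F y)) (r : ℕ) :
    ∀ y, y < b → HasSum (fun k => a k * ℓ k ^ r * exp (ℓ k * y)) (iteratedDeriv r F y) := by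
  induction r with
  | zero => simpa using hF
  | succ r ih =>
    intro y hy
    have hseries : (fun z => ∑' k, a k * ℓ k ^ r * exp (ℓ k * z)) =ᶠ[nhds y] iteratedDeriv r F := by
      filter_upwards [Iio_mem_nhds hy] with z hz
      exact (ih z hz).tsum_eq
    rw [iteratedDeriv_succ,
      ((hasDerivAt_tsum_exp_series hℓ hsum r hy).congr_of_eventuallyEq hseries.symm).deriv]
    exact (hsum (r + 1) y hy).hasSum

end ExpSeries

lemma summable_alternating_odd_pow_mul_exp_mul (r : ℕ) {y : ℝ} (hy : y < 0) :
    Summable fun k : ℕ => (-1 : ℝ) ^ k * (2 * k + 1 : ℝ) ^ r * exp ((2 * k + 1) * y) := by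
  have hodd : Summable fun k : ℕ => ((2 * k + 1 : ℕ) : ℝ) ^ r * exp (-(-y) * (2 * k + 1 : ℕ)) :=
    (summable_pow_mul_exp_neg_nat_mul r (neg_pos.2 hy)).comp_injective
      (fun m n h => by simpa using h : Function.Injective fun k : ℕ => 2 * k + 1)
  refine Summable.of_norm (hodd.congr fun k => ?_)
  rw [norm_mul, norm_mul, norm_pow, norm_neg, norm_one, one_pow, one_mul, Real.norm_eq_abs,
    Real.norm_eq_abs, abs_of_pos (exp_pos _), abs_pow, abs_of_pos (by positivity : (0:ℝ) < 2 * k + 1)]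
  push_cast
  ring_nf

lemma hasSum_half_sech {x : ℝ} (hx : x < 0) :
    HasSum (fun k : ℕ => (-1 : ℝ) ^ k * exp ((2 * k + 1) * x)) (1 / 2 * sech x) := by
  have hq : ‖-exp (2 * x)‖ < 1 := by
    rw [norm_neg, Real.norm_eq_abs, abs_of_pos (exp_pos _)]
    exact exp_lt_one_iff.2 (by linarith)
  have hterm : (fun k : ℕ => (-1 : ℝ) ^ k * exp ((2 * k + 1) * x))
      = fun k : ℕ => exp x * (-exp (2 * x)) ^ k := by
    funext k
    rw [neg_pow (exp _), ← exp_nat_mul, mul_left_comm, ← exp_add]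
    ring_nf
  have hsum : exp x * (1 - -exp (2 * x))⁻¹ = 1 / 2 * sech x := by
    unfold sech
    rw [exp_neg, sub_neg_eq_add, two_mul, exp_add]
    field_simp
    ring
  rw [hterm, ← hsum]
  exact (hasSum_geometric_of_norm_lt_one hq).mul_left (exp x)

theorem iteratedDeriv_half_sech_series_neg (r : ℕ) (x : ℝ) (hx : x < 0) :
    HasSum (fun k : ℕ => (-1 : ℝ) ^ k * ((2 * k + 1 : ℝ)) ^ r * Real.exp ((2 * k + 1) * x))
      (iteratedDeriv r (fun y => (1 / 2) * sech y) x) :=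
  hasSum_iteratedDeriv_of_hasSum_exp_series (fun k => by positivity)
    (fun r _ hy => summable_alternating_odd_pow_mul_exp_mul r hy)
    (fun _ hy => hasSum_half_sech hy) r x hx
end

section
/- For every nonnegative integer r and every real x > 0, the r-th derivative of (1/2)·sech at x equals ∑_{k=0}^∞ (-1)^{r+k} (2k+1)^r e^{-(2k+1)x}. -/
open Real

noncomputable def sechTerm (r k : ℕ) (x : ℝ) : ℝ :=
  (-1 : ℝ) ^ (r + k) * (2 * k + 1 : ℝ) ^ r * exp (-((2 * k + 1) * x))

lemma summable_odd_pow_mul_exp_neg_mul (m : ℕ) {c : ℝ} (hc : 0 < c) :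
    Summable fun k : ℕ => (2 * k + 1 : ℝ) ^ m * exp (-((2 * k + 1) * c)) := by
  have hq : ‖exp (-c)‖ < 1 := by
    rw [norm_of_nonneg (exp_pos _).le, exp_lt_one_iff]
    linarith
  have hodd := (summable_pow_mul_geometric_of_norm_lt_one m hq).comp_injective
    (i := fun k : ℕ => 2 * k + 1) fun a b hab => by simp_all
  refine hodd.congr fun k => ?_
  rw [Function.comp_apply, ← exp_nat_mul]
  push_cast
  ring_nf

lemma abs_sechTerm (r k : ℕ) (x : ℝ) :
    |sechTerm r k x| = (2 * k + 1 : ℝ) ^ r * exp (-((2 * k + 1) * x)) := by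
  simp only [sechTerm, abs_mul, abs_pow, abs_neg, abs_one, one_pow, one_mul]
  rw [abs_of_pos (by positivity), abs_of_pos (exp_pos _)]

lemma abs_sechTerm_le (r k : ℕ) {c x : ℝ} (hcx : c ≤ x) :
    |sechTerm r k x| ≤ (2 * k + 1 : ℝ) ^ r * exp (-((2 * k + 1) * c)) := by
  rw [abs_sechTerm]
  gcongr

lemma summable_sechTerm (r : ℕ) {x : ℝ} (hx : 0 < x) : Summable fun k => sechTerm r k x :=
  .of_norm_bounded (summable_odd_pow_mul_exp_neg_mul r hx) fun k => abs_sechTerm_le r k le_rfl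

lemma hasDerivAt_sechTerm (r k : ℕ) (x : ℝ) :
    HasDerivAt (sechTerm r k) (sechTerm (r + 1) k x) x := by
  have hlin : HasDerivAt (fun y : ℝ => -((2 * k + 1) * y)) (-(2 * k + 1)) x := by
    simpa using ((hasDerivAt_id x).const_mul (2 * k + 1 : ℝ)).fun_neg
  refine (hlin.exp.const_mul ((-1 : ℝ) ^ (r + k) * (2 * k + 1 : ℝ) ^ r)).congr_deriv ?_
  unfold sechTerm
  rw [show r + 1 + k = r + k + 1 by ring, pow_succ, pow_succ]
  ring

lemma hasDerivAt_tsum_sechTerm (r : ℕ) {x : ℝ} (hx : 0 < x) :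
    HasDerivAt (fun y => ∑' k, sechTerm r k y) (∑' k, sechTerm (r + 1) k x) x :=
  hasDerivAt_tsum_of_isPreconnected (summable_odd_pow_mul_exp_neg_mul (r + 1) (half_pos hx))
    isOpen_Ioi isPreconnected_Ioi (fun k y _ => hasDerivAt_sechTerm r k y)
    (fun k _ hy => abs_sechTerm_le (r + 1) k (le_of_lt hy)) (half_lt_self hx)
    (summable_sechTerm r hx) (half_lt_self hx)

lemma hasSum_sechTerm_zero {x : ℝ} (hx : 0 < x) :
    HasSum (fun k => sechTerm 0 k x) ((1 / 2) * sech x) := by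
  have hq : ‖-exp (-(2 * x))‖ < 1 := by
    rw [norm_neg, norm_of_nonneg (exp_pos _).le, exp_lt_one_iff]
    linarith
  have hgeom := (hasSum_geometric_of_norm_lt_one hq).mul_left (exp (-x))
  have hterm (k : ℕ) : sechTerm 0 k x = exp (-x) * (-exp (-(2 * x))) ^ k := by
    unfold sechTerm
    rw [neg_pow (exp _), ← exp_nat_mul, show -((2 * k + 1) * x) = -x + k * -(2 * x) by ring,
      exp_add]
    ring
  have hsum : exp (-x) * (1 - -exp (-(2 * x)))⁻¹ = (1 / 2) * sech x := by
    have hx2 : exp (-(2 * x)) = exp (-x) * exp (-x) := by rw [← exp_add]; ring_nf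
    have hinv : exp (-x) * exp x = 1 := by rw [← exp_add]; simp
    unfold sech
    rw [sub_neg_eq_add, hx2]
    field_simp
    linear_combination hinv
  exact hsum ▸ hgeom.congr_fun hterm

theorem iteratedDeriv_half_sech_series_pos (r : ℕ) (x : ℝ) (hx : 0 < x) :
    HasSum (fun k : ℕ => (-1 : ℝ) ^ (r + k) * ((2 * k + 1 : ℝ)) ^ r * Real.exp (-((2 * k + 1) * x)))
      (iteratedDeriv r (fun y => (1 / 2) * sech y) x) := by
  change HasSum (fun k => sechTerm r k x) _
  induction r generalizing x with
  | zero => simpa using hasSum_sechTerm_zero hx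
  | succ r ih =>
    have hseries : iteratedDeriv r (fun y => (1 / 2) * sech y) =ᶠ[nhds x]
        fun y => ∑' k, sechTerm r k y := by
      filter_upwards [Ioi_mem_nhds hx] with y hy
      exact (ih y hy).tsum_eq.symm
    rw [iteratedDeriv_succ, ((hasDerivAt_tsum_sechTerm r hx).congr_of_eventuallyEq hseries).deriv]
    exact (summable_sechTerm (r + 1) hx).hasSum
end

section
/- Let Δ : ℝ^d → ℝ be given by Δ(β) = (1/2) ∑_{j=1}^n |a_j(β)| - ∑_{α ∈ R} |α(β)| where the a_j and α are finitely many linear functionals on ℝ^d with rational coefficients (and R is finite). If Δ(β) > 0 for every nonzero β in the integer lattice ℤ^d, then Δ(β) > 0 for every nonzero β ∈ ℝ^d. -/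
/-!
Suppose `Δ β ≤ 0` for a real `β ≠ 0`, and fix the signs `ε j` of `a j β`, `δ k` of `α k β` and
`s` of a nonzero coordinate `β i₀`. The rational polyhedron
`{x | 0 ≤ ε j * a j x, 1 ≤ s * x i₀, (1/2) ∑ ε j * a j x - ∑ δ k * α k x ≤ 0}`
contains a positive multiple of `β`, and on it `Δ` is bounded above by the last linear form, since
`|a j x| = ε j * a j x` and `δ k * α k x ≤ |α k x|`. A rational polyhedron with a real point has a
rational point: either some nondegenerate inequality is tight, and a variable can be eliminated
along it, or all are strict and a nearby rational point will do. Clearing denominators then gives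
a nonzero integer point where `Δ ≤ 0`, by homogeneity of `Δ`.
-/

open Finset

section RationalSystems

variable {σ : Type*} [Fintype σ]

def ratDot (c : σ → ℚ) (x : σ → ℝ) : ℝ := ∑ j, (c j : ℝ) * x j

@[simp] theorem sub_ratDot (c c' : σ → ℚ) (x : σ → ℝ) :
    ratDot (c - c') x = ratDot c x - ratDot c' x := by
  simp [ratDot, sub_mul, sum_sub_distrib]

@[simp] theorem smul_ratDot (t : ℚ) (c : σ → ℚ) (x : σ → ℝ) :
    ratDot (t • c) x = t * ratDot c x := by
  simp [ratDot, mul_sum, mul_assoc]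

@[simp] theorem ratDot_smul (c : σ → ℚ) (t : ℝ) (x : σ → ℝ) :
    ratDot c (t • x) = t * ratDot c x := by
  simp only [ratDot, mul_sum, Pi.smul_apply, smul_eq_mul]
  exact sum_congr rfl fun _ _ => by ring

@[simp] theorem sum_ratDot {ι : Type*} (s : Finset ι) (c : ι → σ → ℚ) (x : σ → ℝ) :
    ratDot (∑ i ∈ s, c i) x = ∑ i ∈ s, ratDot (c i) x := by
  simp only [ratDot, Finset.sum_apply, Rat.cast_sum, sum_mul]
  exact sum_comm

@[simp] theorem single_ratDot [DecidableEq σ] (i : σ) (x : σ → ℝ) :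
    ratDot (Pi.single i 1) x = x i := by
  simp [ratDot, Pi.single_apply, apply_ite (Rat.cast : ℚ → ℝ), ite_mul]

def IsSolution (S : Finset ((σ → ℚ) × ℚ)) (x : σ → ℝ) : Prop := ∀ p ∈ S, ratDot p.1 x ≤ p.2

theorem exists_rat_isSolution_of_lt {S : Finset ((σ → ℚ) × ℚ)} {x : σ → ℝ} (hx : IsSolution S x)
    (hlt : ∀ p ∈ S, p.1 ≠ 0 → ratDot p.1 x < p.2) :
    ∃ q : σ → ℚ, IsSolution S fun j => (q j : ℝ) := by
  set U : Set (σ → ℝ) := ⋂ p ∈ S, {y | p.1 ≠ 0 → ratDot p.1 y < p.2}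
  have hU : IsOpen U := by
    refine isOpen_biInter_finset fun p _ => ?_
    by_cases hp : p.1 = 0
    · simp [hp]
    · simpa [hp] using isOpen_lt (by unfold ratDot; fun_prop) continuous_const
  obtain ⟨q, hq⟩ := (DenseRange.piMap fun _ => Rat.denseRange_cast (𝕜 := ℝ)).exists_mem_open hU
    ⟨x, Set.mem_iInter₂.2 hlt⟩
  refine ⟨q, fun p hp => ?_⟩
  by_cases hp0 : p.1 = 0
  · simpa [ratDot, hp0] using hx p hp
  · exact (Set.mem_iInter₂.1 hq p hp hp0).le

end RationalSystems

section Elimination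

variable {d : ℕ}

/-- Substitutes into `p` the value of the variable `j₀` obtained by solving `p₀` as an equation. -/
def eliminate (p₀ : (Fin (d + 1) → ℚ) × ℚ) (j₀ : Fin (d + 1)) (p : (Fin (d + 1) → ℚ) × ℚ) :
    (Fin d → ℚ) × ℚ :=
  (fun j => p.1 (j₀.succAbove j) - p.1 j₀ / p₀.1 j₀ * p₀.1 (j₀.succAbove j),
    p.2 - p.1 j₀ / p₀.1 j₀ * p₀.2)

theorem ratDot_eq_eliminate {p₀ : (Fin (d + 1) → ℚ) × ℚ} {j₀ : Fin (d + 1)} (h₀ : p₀.1 j₀ ≠ 0)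
    (p : (Fin (d + 1) → ℚ) × ℚ) (x : Fin (d + 1) → ℝ) :
    ratDot p.1 x =
      ratDot (eliminate p₀ j₀ p).1 (x ∘ j₀.succAbove) + (p.1 j₀ / p₀.1 j₀ : ℚ) * ratDot p₀.1 x := by
  have h₀' : (p₀.1 j₀ : ℝ) ≠ 0 := by exact_mod_cast h₀
  simp only [ratDot, eliminate, Fin.sum_univ_succAbove _ j₀, Function.comp_apply, Rat.cast_sub,
    Rat.cast_mul, Rat.cast_div, sub_mul, sum_sub_distrib, mul_add, mul_sum, mul_assoc]
  field_simp
  ring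

theorem isSolution_image_eliminate_iff {S : Finset ((Fin (d + 1) → ℚ) × ℚ)}
    {p₀ : (Fin (d + 1) → ℚ) × ℚ} {j₀ : Fin (d + 1)} (h₀ : p₀.1 j₀ ≠ 0) {x : Fin (d + 1) → ℝ}
    (htight : ratDot p₀.1 x = p₀.2) :
    IsSolution (S.image (eliminate p₀ j₀)) (x ∘ j₀.succAbove) ↔ IsSolution S x := by
  refine Finset.forall_mem_image.trans (forall₂_congr fun p _ => ?_)
  have hrhs : (p.2 : ℝ) = (eliminate p₀ j₀ p).2 + (p.1 j₀ / p₀.1 j₀ : ℚ) * p₀.2 := by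
    simp only [eliminate]
    push_cast
    ring
  rw [ratDot_eq_eliminate h₀ p x, htight, hrhs, add_le_add_iff_right]

theorem exists_rat_isSolution {S : Finset ((Fin d → ℚ) × ℚ)} {x : Fin d → ℝ}
    (hx : IsSolution S x) : ∃ q : Fin d → ℚ, IsSolution S fun j => (q j : ℝ) := by
  induction d with
  | zero => exact exists_rat_isSolution_of_lt hx fun p _ hp => (hp (Subsingleton.elim _ _)).elim
  | succ d ih =>
    by_cases hlt : ∀ p ∈ S, p.1 ≠ 0 → ratDot p.1 x < p.2
    · exact exists_rat_isSolution_of_lt hx hlt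
    push Not at hlt
    obtain ⟨p₀, hp₀S, hp₀, hge⟩ := hlt
    have hx₀ : ratDot p₀.1 x = p₀.2 := (hx p₀ hp₀S).antisymm hge
    obtain ⟨j₀, hj₀⟩ := Function.ne_iff.1 hp₀
    obtain ⟨q', hq'⟩ := ih ((isSolution_image_eliminate_iff hj₀ hx₀).2 hx)
    set v : ℚ := (p₀.2 - ∑ j, p₀.1 (j₀.succAbove j) * q' j) / p₀.1 j₀
    refine ⟨j₀.insertNth v q', (isSolution_image_eliminate_iff hj₀ ?_).1 ?_⟩
    · have : (p₀.1 j₀ : ℝ) ≠ 0 := by exact_mod_cast hj₀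
      simp only [ratDot, Fin.sum_univ_succAbove _ j₀, Fin.insertNth_apply_same,
        Fin.insertNth_apply_succAbove, v]
      push_cast
      field_simp
      ring
    · convert hq' using 2 with j
      simp

end Elimination

section Defect

variable {ι κ σ : Type*} [Fintype ι] [Fintype κ] [Fintype σ]

/-- Unlike `SignType.sign`, never zero, so that `0 ≤ signNonzero r * u` forces
`|u| = signNonzero r * u`. -/
noncomputable def signNonzero (r : ℝ) : ℚ := if 0 ≤ r then 1 else -1

theorem abs_signNonzero (r : ℝ) : |(signNonzero r : ℝ)| = 1 := by
  unfold signNonzero; split_ifs <;> simp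

theorem signNonzero_mul_self (r : ℝ) : (signNonzero r : ℝ) * r = |r| := by
  unfold signNonzero
  split_ifs with h
  · simp [abs_of_nonneg h]
  · simp [abs_of_neg (not_le.1 h)]

theorem signNonzero_mul_le_abs (r u : ℝ) : (signNonzero r : ℝ) * u ≤ |u| := by
  simpa [abs_mul, abs_signNonzero] using le_abs_self ((signNonzero r : ℝ) * u)

theorem abs_eq_signNonzero_mul {r u : ℝ} (h : 0 ≤ (signNonzero r : ℝ) * u) :
    |u| = (signNonzero r : ℝ) * u := by
  simpa [abs_mul, abs_signNonzero] using abs_of_nonneg h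

noncomputable def defect (a : ι → σ → ℚ) (α : κ → σ → ℚ) (x : σ → ℝ) : ℝ :=
  (1 / 2) * ∑ j, |ratDot (a j) x| - ∑ k, |ratDot (α k) x|

theorem defect_smul (a : ι → σ → ℚ) (α : κ → σ → ℚ) (t : ℝ) (x : σ → ℝ) :
    defect a α (t • x) = |t| * defect a α x := by
  simp only [defect, ratDot_smul, abs_mul, ← mul_sum]
  ring

theorem exists_int_ne_zero_defect_nonpos (a : ι → σ → ℚ) (α : κ → σ → ℚ) {q : σ → ℚ}
    (hq₀ : q ≠ 0) (hq : defect a α (fun i => (q i : ℝ)) ≤ 0) :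
    ∃ z : σ → ℤ, z ≠ 0 ∧ defect a α (fun i => (z i : ℝ)) ≤ 0 := by
  obtain ⟨⟨N, hN⟩, hNq⟩ := IsLocalization.exist_integer_multiples (nonZeroDivisors ℤ) univ q
  choose z hz using fun i => hNq i (mem_univ i)
  have hN₀ : N ≠ 0 := mem_nonZeroDivisors_iff_ne_zero.1 hN
  have hzq : (fun i => (z i : ℝ)) = (N : ℝ) • fun i => (q i : ℝ) := by
    funext i
    simpa using congrArg (Rat.cast : ℚ → ℝ) (hz i)
  refine ⟨z, fun hz₀ => hq₀ (funext fun i => ?_), ?_⟩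
  · simpa [hz₀, hN₀] using (hz i).symm
  · rw [hzq, defect_smul]
    exact mul_nonpos_of_nonneg_of_nonpos (abs_nonneg _) hq

theorem exists_rat_ne_zero_defect_nonpos {d : ℕ} (a : ι → Fin d → ℚ) (α : κ → Fin d → ℚ)
    {β : Fin d → ℝ} (hβ : β ≠ 0) (hβΔ : defect a α β ≤ 0) :
    ∃ q : Fin d → ℚ, q ≠ 0 ∧ defect a α (fun i => (q i : ℝ)) ≤ 0 := by
  obtain ⟨i₀, hi₀⟩ := Function.ne_iff.1 hβ
  set ε : ι → ℚ := fun j => signNonzero (ratDot (a j) β)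
  set δ : κ → ℚ := fun k => signNonzero (ratDot (α k) β)
  set s : ℚ := signNonzero (β i₀)
  set ℓ : Fin d → ℚ := ∑ j, ((1 / 2 : ℚ) * ε j) • a j - ∑ k, δ k • α k
  set S : Finset ((Fin d → ℚ) × ℚ) :=
    insert (ℓ, 0) (insert (-s • Pi.single i₀ 1, -1) (univ.image fun j => (-ε j • a j, 0)))
  have hS : ∀ x, IsSolution S x ↔
      ratDot ℓ x ≤ 0 ∧ 1 ≤ s * x i₀ ∧ ∀ j, 0 ≤ ε j * ratDot (a j) x := by
    intro x
    simp only [IsSolution, S, forall_mem_insert, forall_mem_image, smul_ratDot, single_ratDot]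
    push_cast
    simp only [neg_mul, neg_le_neg_iff, neg_nonpos, mem_univ, forall_const]
  have hℓ : ∀ x, ratDot ℓ x = (1 / 2) * ∑ j, ε j * ratDot (a j) x - ∑ k, δ k * ratDot (α k) x := by
    intro x
    simp [ℓ, mul_sum, mul_assoc]
  have hℓβ : ratDot ℓ β = defect a α β := by
    simp only [hℓ, ε, δ, signNonzero_mul_self, defect]
  have hβ₀ : 0 < |β i₀| := abs_pos.2 hi₀
  have hx : IsSolution S (|β i₀|⁻¹ • β) := by
    refine (hS _).2 ⟨?_, ?_, fun j => ?_⟩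
    · rw [ratDot_smul, hℓβ]
      exact mul_nonpos_of_nonneg_of_nonpos (by positivity) hβΔ
    · rw [Pi.smul_apply, smul_eq_mul, mul_left_comm, signNonzero_mul_self, inv_mul_cancel₀ hβ₀.ne']
    · rw [ratDot_smul, mul_left_comm, signNonzero_mul_self]
      positivity
  obtain ⟨q, hq⟩ := exists_rat_isSolution hx
  obtain ⟨hqℓ, hqs, hqa⟩ := (hS _).1 hq
  refine ⟨q, ?_, ?_⟩
  · rintro rfl
    norm_num at hqs
  · calc defect a α (fun i => (q i : ℝ))
        ≤ ratDot ℓ (fun i => (q i : ℝ)) := by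
          rw [hℓ, defect]
          gcongr with j _ k _
          · exact (abs_eq_signNonzero_mul (hqa j)).le
          · exact signNonzero_mul_le_abs _ _
      _ ≤ 0 := hqℓ

end Defect

theorem conical_integral_iff_real (d n m : ℕ) (a : Fin n → Fin d → ℚ) (α : Fin m → Fin d → ℚ)
    (Δ : (Fin d → ℝ) → ℝ)
    (hΔ : ∀ β, Δ β = (1 / 2) * ∑ j, |∑ i, (a j i : ℝ) * β i| - ∑ k, |∑ i, (α k i : ℝ) * β i|)
    (hpos : ∀ β : Fin d → ℤ, β ≠ 0 → 0 < Δ (fun i => (β i : ℝ))) :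
    ∀ β : Fin d → ℝ, β ≠ 0 → 0 < Δ β := by
  obtain rfl : Δ = defect a α := funext hΔ
  intro β hβ
  by_contra! hle
  obtain ⟨q, hq₀, hq⟩ := exists_rat_ne_zero_defect_nonpos a α hβ hle
  obtain ⟨z, hz₀, hz⟩ := exists_int_ne_zero_defect_nonpos a α hq₀ hq
  exact (hpos z hz₀).not_ge hz
end

section
/- With the setup of the previous statement (one-variable Weyl algebra, a > 0), any linear functional Tr' : W → ℂ satisfying Tr'(w₁w₂) = Tr'(ω(w₂)w₁) for the automorphism ω(x) = -e^{-2πa}x, ω(y) = -e^{2πa}y, and Tr'(1) = 0, is identically zero. Consequently the space of such twisted traces is one-dimensional. -/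
open Polynomial Real

/-- The operator `x`: multiplication by `X` on `ℂ[X]`. -/
noncomputable def Wx : Module.End ℂ (Polynomial ℂ) := LinearMap.mulLeft ℂ (X : Polynomial ℂ)

/-- The operator `y = -d/dX` on `ℂ[X]`, so that `[Wx, Wy] = 1`. -/
noncomputable def Wy : Module.End ℂ (Polynomial ℂ) := -(Polynomial.derivative : Polynomial ℂ →ₗ[ℂ] Polynomial ℂ)

/-- The Weyl algebra in one variable, realized as operators on `ℂ[X]`. -/
noncomputable def WeylW : Subalgebra ℂ (Module.End ℂ (Polynomial ℂ)) :=
  Algebra.adjoin ℂ {Wx, Wy}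

noncomputable def WxW : WeylW := ⟨Wx, Algebra.subset_adjoin (Set.mem_insert _ _)⟩

noncomputable def WyW : WeylW := ⟨Wy, Algebra.subset_adjoin (Set.mem_insert_of_mem _ rfl)⟩

/-!
Write `h = x y`. Since the eigenvalues of `ω` on `x` and `y` are inverse to each other, `ω` fixes
`h`, so the twisted trace property gives `Tr'(h w) = Tr'(w h)`; as `[h, x^u y^v] = (v - u) x^u y^v`,
`Tr'` kills every monomial `x^u y^v` with `u ≠ v`. With `w₂ = x` it gives
`Tr'(x^u y^(u+1) x) = q Tr'(x^(u+1) y^(u+1))` for `q = -e^(-2πa)`, that is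
`(1 - q) Tr'(x^(u+1) y^(u+1)) = (u + 1) Tr'(x^u y^u)`, and since `q ≠ 1` induction from `Tr'(1) = 0`
kills the diagonal monomials. The monomials span `W`.
-/

namespace WeylRelation

variable {A : Type*} [Ring A] {x y : A}

theorem y_pow_succ_mul_x (hxy : x * y - y * x = 1) (n : ℕ) :
    y ^ (n + 1) * x = x * y ^ (n + 1) - (n + 1) • y ^ n := by
  have hyx : y * x = x * y - 1 := by rw [← hxy]; abel
  induction n with
  | zero => simpa using hyx
  | succ n ih =>
    rw [pow_succ' y (n + 1), mul_assoc, ih, mul_sub, ← mul_assoc, hyx, mul_smul_comm,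
      ← pow_succ', sub_mul, mul_assoc, ← pow_succ', succ_nsmul _ (n + 1)]
    noncomm_ring

theorem y_mul_x_pow_succ (hxy : x * y - y * x = 1) (n : ℕ) :
    y * x ^ (n + 1) = x ^ (n + 1) * y - (n + 1) • x ^ n := by
  have h := y_pow_succ_mul_x (x := MulOpposite.op y) (y := MulOpposite.op x)
    (by rw [← MulOpposite.op_mul, ← MulOpposite.op_mul, ← MulOpposite.op_sub, hxy,
      MulOpposite.op_one]) n
  apply MulOpposite.op_injective
  simpa only [MulOpposite.op_mul, MulOpposite.op_sub, MulOpposite.op_smul, MulOpposite.op_pow]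
    using h

theorem monomial_mul_x (hxy : x * y - y * x = 1) (u v : ℕ) :
    x ^ u * y ^ (v + 1) * x = x ^ (u + 1) * y ^ (v + 1) - (v + 1) • (x ^ u * y ^ v) := by
  rw [mul_assoc, y_pow_succ_mul_x hxy, mul_sub, ← mul_assoc, ← pow_succ, mul_smul_comm]

theorem monomial_mul_xy (hxy : x * y - y * x = 1) (u v : ℕ) :
    x ^ u * y ^ v * (x * y) = x ^ (u + 1) * y ^ (v + 1) - v • (x ^ u * y ^ v) := by
  cases v with
  | zero => simp [mul_assoc, pow_succ]
  | succ v => rw [← mul_assoc, monomial_mul_x hxy, sub_mul, smul_mul_assoc, mul_assoc, ← pow_succ,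
      mul_assoc, ← pow_succ]

theorem xy_mul_monomial (hxy : x * y - y * x = 1) (u v : ℕ) :
    x * y * (x ^ u * y ^ v) = x ^ (u + 1) * y ^ (v + 1) - u • (x ^ u * y ^ v) := by
  cases u with
  | zero => rw [pow_zero, one_mul, mul_assoc, ← pow_succ', zero_smul, sub_zero, pow_one]
  | succ u => rw [mul_assoc, ← mul_assoc y, y_mul_x_pow_succ hxy, sub_mul, mul_sub, ← mul_assoc,
      ← mul_assoc, ← pow_succ', mul_assoc, ← pow_succ', smul_mul_assoc, mul_smul_comm,
      ← mul_assoc, ← pow_succ']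

theorem span_monomials_eq_top {R : Type*} [CommRing R] [Algebra R A] (hxy : x * y - y * x = 1)
    (hgen : Algebra.adjoin R {x, y} = ⊤) :
    Submodule.span R (Set.range fun p : ℕ × ℕ => x ^ p.1 * y ^ p.2) = ⊤ := by
  set S := Submodule.span R (Set.range fun p : ℕ × ℕ => x ^ p.1 * y ^ p.2)
  have mem : ∀ u v : ℕ, x ^ u * y ^ v ∈ S := fun u v => Submodule.subset_span ⟨(u, v), rfl⟩
  have right_mul_mem (g : A) (hg : ∀ u v : ℕ, x ^ u * y ^ v * g ∈ S) : ∀ s ∈ S, s * g ∈ S := by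
    intro s hs
    induction hs using Submodule.span_induction with
    | mem _ h => obtain ⟨⟨u, v⟩, rfl⟩ := h; exact hg u v
    | zero => simp
    | add _ _ _ _ h₁ h₂ => rw [add_mul]; exact S.add_mem h₁ h₂
    | smul c _ _ h => rw [smul_mul_assoc]; exact S.smul_mem c h
  have mul_x_mem : ∀ s ∈ S, s * x ∈ S := right_mul_mem x fun u v => by
    cases v with
    | zero => rw [pow_zero, mul_one, ← pow_succ]; simpa using mem (u + 1) 0
    | succ v => rw [monomial_mul_x hxy]; exact S.sub_mem (mem _ _) (S.smul_of_tower_mem _ (mem _ _))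
  have mul_y_mem : ∀ s ∈ S, s * y ∈ S := right_mul_mem y fun u v => by
    rw [mul_assoc, ← pow_succ]; exact mem _ _
  have mul_adjoin_mem : ∀ w ∈ Algebra.adjoin R {x, y}, ∀ s ∈ S, s * w ∈ S := by
    intro w hw
    induction hw using Algebra.adjoin_induction with
    | mem g hg =>
      rcases hg with rfl | rfl
      exacts [mul_x_mem, mul_y_mem]
    | algebraMap r => intro s hs; rw [← Algebra.commutes, ← Algebra.smul_def]; exact S.smul_mem r hs
    | add _ _ _ _ h₁ h₂ => intro s hs; rw [mul_add]; exact S.add_mem (h₁ s hs) (h₂ s hs)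
    | mul _ _ _ _ h₁ h₂ => intro s hs; rw [← mul_assoc]; exact h₂ _ (h₁ s hs)
  refine Submodule.eq_top_iff'.mpr fun w => ?_
  simpa using mul_adjoin_mem w (hgen ▸ Algebra.mem_top) 1 (by simpa using mem 0 0)

section Functional

variable {K : Type*} [Field K] [Algebra K A] {T : A →ₗ[K] K}

theorem apply_monomial_eq_zero_of_ne [CharZero K] (hxy : x * y - y * x = 1)
    (hT : ∀ w, T (w * (x * y)) = T (x * y * w)) {u v : ℕ} (huv : u ≠ v) : T (x ^ u * y ^ v) = 0 := by
  have h := hT (x ^ u * y ^ v)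
  rw [monomial_mul_xy hxy, xy_mul_monomial hxy, map_sub, map_sub, map_nsmul, map_nsmul,
    nsmul_eq_mul, nsmul_eq_mul] at h
  have : ((u : K) - v) * T (x ^ u * y ^ v) = 0 := by linear_combination h
  simpa [sub_eq_zero, huv] using this

theorem apply_monomial_self_eq_zero (hxy : x * y - y * x = 1) {q : K} (hq : q ≠ 1)
    (hT : ∀ w, T (w * x) = q * T (x * w)) (h1 : T 1 = 0) (u : ℕ) : T (x ^ u * y ^ u) = 0 := by
  induction u with
  | zero => simpa using h1
  | succ u ih =>
    have h := hT (x ^ u * y ^ (u + 1))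
    rw [monomial_mul_x hxy, map_sub, map_nsmul, ih, smul_zero, sub_zero, ← mul_assoc, ← pow_succ']
      at h
    have : (1 - q) * T (x ^ (u + 1) * y ^ (u + 1)) = 0 := by linear_combination h
    simpa [sub_eq_zero, hq.symm] using this

theorem eq_zero_of_twisted_trace [CharZero K] (hxy : x * y - y * x = 1)
    (hgen : Algebra.adjoin K {x, y} = ⊤) {q : K} (hq : q ≠ 1)
    (hTx : ∀ w, T (w * x) = q * T (x * w)) (hTxy : ∀ w, T (w * (x * y)) = T (x * y * w))
    (h1 : T 1 = 0) : T = 0 := by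
  refine LinearMap.ext_on_range (span_monomials_eq_top hxy hgen) fun ⟨u, v⟩ => ?_
  rcases eq_or_ne u v with rfl | huv
  · exact apply_monomial_self_eq_zero hxy hq hTx h1 u
  · exact apply_monomial_eq_zero_of_ne hxy hTxy huv

end Functional

end WeylRelation

open WeylRelation

theorem WxW_mul_WyW_sub : WxW * WyW - WyW * WxW = 1 := by
  apply Subtype.ext
  change Wx * Wy - Wy * Wx = 1
  refine LinearMap.ext fun p => ?_
  simp [Wx, Wy, derivative_mul]

theorem adjoin_WxW_WyW : Algebra.adjoin ℂ {WxW, WyW} = ⊤ := by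
  have h : (Subtype.val ⁻¹' {Wx, Wy} : Set WeylW) = {WxW, WyW} := by
    ext w
    simp only [Set.mem_preimage, Set.mem_insert_iff, Set.mem_singleton_iff, Subtype.ext_iff]
    rfl
  rw [← h]
  exact Algebra.adjoin_adjoin_coe_preimage

theorem neg_exp_mul_neg_exp_neg (t : ℝ) : (-(Real.exp (-t)) : ℂ) * (-(Real.exp t)) = 1 := by
  rw [neg_mul_neg, ← Complex.ofReal_mul, ← Real.exp_add, neg_add_cancel, Real.exp_zero,
    Complex.ofReal_one]

theorem neg_exp_ne_one (t : ℝ) : (-(Real.exp t) : ℂ) ≠ 1 := by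
  intro h
  have := congrArg Complex.re h
  simp only [Complex.neg_re, Complex.ofReal_re, Complex.one_re] at this
  linarith [Real.exp_pos t]

set_option synthInstance.maxHeartbeats 800000 in
theorem twisted_trace_unique_general (a : ℝ)
    (ω : WeylW →ₐ[ℂ] WeylW)
    (hωx : ((ω WxW : WeylW) : Module.End ℂ (Polynomial ℂ)) = (-(Real.exp (-(2 * π * a))) : ℂ) • Wx)
    (hωy : ((ω WyW : WeylW) : Module.End ℂ (Polynomial ℂ)) = (-(Real.exp (2 * π * a)) : ℂ) • Wy)
    (Tr' : WeylW →ₗ[ℂ] ℂ)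
    (htr : ∀ w₁ w₂ : WeylW, Tr' (w₁ * w₂) = Tr' (ω w₂ * w₁))
    (hone : Tr' 1 = 0) :
    Tr' = 0 := by
  have hωX : ω WxW = (-(Real.exp (-(2 * π * a))) : ℂ) • WxW := Subtype.ext hωx
  have hωY : ω WyW = (-(Real.exp (2 * π * a)) : ℂ) • WyW := Subtype.ext hωy
  have hωXY : ω (WxW * WyW) = WxW * WyW := by
    rw [map_mul, hωX, hωY, smul_mul_smul_comm, neg_exp_mul_neg_exp_neg, one_smul]
  have hTx (w : WeylW) : Tr' (w * WxW) = (-(Real.exp (-(2 * π * a))) : ℂ) * Tr' (WxW * w) := by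
    rw [htr, hωX, smul_mul_assoc, map_smul, smul_eq_mul]
  have hTxy (w : WeylW) : Tr' (w * (WxW * WyW)) = Tr' (WxW * WyW * w) := by rw [htr, hωXY]
  exact eq_zero_of_twisted_trace (x := WxW) WxW_mul_WyW_sub adjoin_WxW_WyW (neg_exp_ne_one _)
    hTx hTxy hone

set_option synthInstance.maxHeartbeats 800000 in
theorem twisted_trace_unique (a : ℝ) (ha : 0 < a)
    (ω : WeylW →ₐ[ℂ] WeylW)
    (hωx : ((ω WxW : WeylW) : Module.End ℂ (Polynomial ℂ)) = (-(Real.exp (-(2 * π * a))) : ℂ) • Wx)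
    (hωy : ((ω WyW : WeylW) : Module.End ℂ (Polynomial ℂ)) = (-(Real.exp (2 * π * a)) : ℂ) • Wy)
    (Tr' : WeylW →ₗ[ℂ] ℂ)
    (htr : ∀ w₁ w₂ : WeylW, Tr' (w₁ * w₂) = Tr' (ω w₂ * w₁))
    (hone : Tr' 1 = 0) :
    Tr' = 0 :=
  twisted_trace_unique_general a ω hωx hωy Tr' htr hone
end
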